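/- arXiv:2301.13847 — 3 statements merged into one kernel-verified Lean document; each statement's English description precedes it below -/
import Mathlib

section
/- For n ≤ l−2, the action of the Weyl representative w̃_n on the simple roots α_1,…,α_l of SO_{2l} satisfies: w̃_n α_i = α_{n−i} for 1 ≤ i ≤ n−1; (w̃_n α_n)(t) = t_1⁻¹ t_{n+1}⁻¹ (a negative root); w̃_n α_i = α_i for n+1 ≤ i ≤ l−2; and w̃_n swaps α_{l−1} and α_l if n is odd and fixes them if n is even. Consequently θ_{w̃_n} = Δ(SO_{2l}) \ {α_n}. -/
open Matrix

noncomputable section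

def torusD (F : Type*) [Field F] (l : ℕ) (t : Fin l → Fˣ) :
    Matrix (Fin (2*l)) (Fin (2*l)) F :=
  Matrix.of fun i j =>
    if (i:ℕ) = (j:ℕ) then
      (if hi : (i:ℕ) < l then ((t ⟨(i:ℕ), hi⟩ : Fˣ) : F)
       else (((t ⟨2*l-1-(i:ℕ), by have := i.isLt; omega⟩ : Fˣ)⁻¹ : Fˣ) : F))
    else 0

/-- `w̃_n` as a matrix: `I_n` in the corners, identity in the middle blocks, and
`J_2^n` in the center. -/
def wtnMat (F : Type*) [Field F] (l n : ℕ) : Matrix (Fin (2*l)) (Fin (2*l)) F :=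
  Matrix.of fun i j =>
    if (i:ℕ) < n then (if (j:ℕ) = (i:ℕ) + (2*l - n) then 1 else 0)
    else if 2*l - n ≤ (i:ℕ) then (if (j:ℕ) + (2*l - n) = (i:ℕ) then 1 else 0)
    else if n % 2 = 1 ∧ (i:ℕ) = l - 1 then (if (j:ℕ) = l then 1 else 0)
    else if n % 2 = 1 ∧ (i:ℕ) = l then (if (j:ℕ) = l - 1 then 1 else 0)
    else if (i:ℕ) = (j:ℕ) then 1 else 0

/-- Evaluation of the simple root `α_k` of type `D_l` on a diagonal torus matrix `T`
(`1 ≤ k ≤ l`): `α_k(T) = T_{k,k}/T_{k+1,k+1}` for `k ≤ l-1` (1-indexed), and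
`α_l(T) = T_{l-1,l-1} · T_{l,l}`. -/
def rootEval (F : Type*) [Field F] (l k : ℕ) (T : Matrix (Fin (2*l)) (Fin (2*l)) F) : F :=
  if h : 1 ≤ k ∧ k + 1 ≤ l then
    T ⟨k-1, by omega⟩ ⟨k-1, by omega⟩ / T ⟨k, by omega⟩ ⟨k, by omega⟩
  else if h2 : k = l ∧ 2 ≤ l then
    T ⟨l-2, by omega⟩ ⟨l-2, by omega⟩ * T ⟨l-1, by omega⟩ ⟨l-1, by omega⟩
  else 0

def sig (l n i : ℕ) : ℕ :=
  if i < n then i + (2*l - n)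
  else if 2*l - n ≤ i then i - (2*l - n)
  else if n % 2 = 1 ∧ i = l - 1 then l
  else if n % 2 = 1 ∧ i = l then l - 1
  else i

lemma sig_lt (l n : ℕ) (hn : 1 ≤ n) (hnl : n + 2 ≤ l) (i : ℕ) (hi : i < 2*l) :
    sig l n i < 2*l := by
  simp only [sig]; split_ifs <;> omega

lemma sig_sig (l n : ℕ) (hn : 1 ≤ n) (hnl : n + 2 ≤ l) (i : ℕ) (hi : i < 2*l) :
    sig l n (sig l n i) = i := by
  simp only [sig]; split_ifs <;> omega

lemma wtn_apply (F : Type*) [Field F] (l n : ℕ) (a b : Fin (2*l)) :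
    wtnMat F l n a b = if (b:ℕ) = sig l n (a:ℕ) then 1 else 0 := by
  simp only [wtnMat, sig, of_apply]
  split_ifs <;> first | rfl | omega

lemma conj_diag (F : Type*) [Field F] (l n : ℕ) (hn : 1 ≤ n) (hnl : n + 2 ≤ l)
    (t : Fin l → Fˣ) (j : ℕ) (hj : j < 2*l) (m : ℕ) (hm : sig l n j = m) (hml : m < 2*l) :
    (wtnMat F l n * torusD F l t * wtnMat F l n) ⟨j, hj⟩ ⟨j, hj⟩
      = torusD F l t ⟨m, hml⟩ ⟨m, hml⟩ := by
  subst hm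
  set i : Fin (2*l) := ⟨j, hj⟩ with hidef
  set s : Fin (2*l) := ⟨sig l n j, hml⟩ with hsdef
  rw [Matrix.mul_apply, Finset.sum_eq_single s]
  · rw [Matrix.mul_apply, Finset.sum_eq_single s]
    · rw [wtn_apply, if_pos rfl, one_mul, wtn_apply,
        if_pos (show (i:ℕ) = sig l n (s:ℕ) from (sig_sig l n hn hnl j hj).symm), mul_one]
    · intro a _ ha
      rw [wtn_apply, if_neg (fun h => ha (Fin.ext h)), zero_mul]
    · intro h; exact absurd (Finset.mem_univ s) h
  · intro b _ hb
    rw [wtn_apply, if_neg, mul_zero]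
    intro h
    refine hb (Fin.ext ?_)
    have h2 := congrArg (sig l n) h
    rw [sig_sig l n hn hnl _ b.isLt] at h2
    exact h2.symm
  · intro h; exact absurd (Finset.mem_univ s) h

lemma torusD_lt (F : Type*) [Field F] (l : ℕ) (t : Fin l → Fˣ) (j : ℕ) (hj : j < 2*l)
    (m : ℕ) (hm : j = m) (hml : m < l) :
    torusD F l t ⟨j, hj⟩ ⟨j, hj⟩ = ((t ⟨m, hml⟩ : Fˣ) : F) := by
  subst hm
  simp only [torusD, of_apply]
  rw [if_pos trivial, dif_pos hml]

lemma torusD_ge (F : Type*) [Field F] (l : ℕ) (t : Fin l → Fˣ) (j : ℕ) (hj : j < 2*l)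
    (hjl : ¬ j < l) (m : ℕ) (hm : 2*l-1-j = m) (hml : m < l) :
    torusD F l t ⟨j, hj⟩ ⟨j, hj⟩ = (((t ⟨m, hml⟩ : Fˣ)⁻¹ : Fˣ) : F) := by
  subst hm
  simp only [torusD, of_apply]
  rw [if_pos trivial, dif_neg hjl]

section
variable {F : Type*} [Field F]

lemma L1 (l n : ℕ) (hn : 1 ≤ n) (hnl : n + 2 ≤ l) (t : Fin l → Fˣ)
    (i : ℕ) (h1 : 1 ≤ i) (h2 : i ≤ n - 1) :
    rootEval F l i (wtnMat F l n * torusD F l t * wtnMat F l n)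
      = rootEval F l (n - i) (torusD F l t) := by
  rw [rootEval, dif_pos ⟨h1, by omega⟩, rootEval, dif_pos ⟨by omega, by omega⟩,
    conj_diag F l n hn hnl t (i-1) (by omega) (i-1+(2*l-n))
      (by unfold sig; split_ifs <;> omega) (by omega),
    conj_diag F l n hn hnl t i (by omega) (i+(2*l-n))
      (by unfold sig; split_ifs <;> omega) (by omega),
    torusD_ge F l t (i-1+(2*l-n)) (by omega) (by omega) (n-i) (by omega) (by omega),
    torusD_ge F l t (i+(2*l-n)) (by omega) (by omega) (n-i-1) (by omega) (by omega),
    torusD_lt F l t (n-i-1) (by omega) (n-i-1) rfl (by omega),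
    torusD_lt F l t (n-i) (by omega) (n-i) rfl (by omega),
    Units.val_inv_eq_inv_val, Units.val_inv_eq_inv_val, inv_div_inv]

lemma L2 (l n : ℕ) (hn : 1 ≤ n) (hnl : n + 2 ≤ l) (t : Fin l → Fˣ) :
    rootEval F l n (wtnMat F l n * torusD F l t * wtnMat F l n)
      = (((t ⟨0, by have := hnl; omega⟩ : Fˣ) : F) * ((t ⟨n, by have := hnl; omega⟩ : Fˣ) : F))⁻¹ := by
  rw [rootEval, dif_pos ⟨hn, by omega⟩,
    conj_diag F l n hn hnl t (n-1) (by omega) (n-1+(2*l-n))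
      (by unfold sig; split_ifs <;> omega) (by omega),
    conj_diag F l n hn hnl t n (by omega) n
      (by unfold sig; split_ifs <;> omega) (by omega),
    torusD_ge F l t (n-1+(2*l-n)) (by omega) (by omega) 0 (by omega) (by omega),
    torusD_lt F l t n (by omega) n rfl (by omega),
    Units.val_inv_eq_inv_val, mul_inv, div_eq_mul_inv]

lemma L3 (l n : ℕ) (hn : 1 ≤ n) (hnl : n + 2 ≤ l) (t : Fin l → Fˣ)
    (i : ℕ) (h1 : n + 1 ≤ i) (h2 : i ≤ l - 2) :
    rootEval F l i (wtnMat F l n * torusD F l t * wtnMat F l n)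
      = rootEval F l i (torusD F l t) := by
  rw [rootEval, dif_pos (⟨by omega, by omega⟩ : 1 ≤ i ∧ i + 1 ≤ l), rootEval,
    dif_pos (⟨by omega, by omega⟩ : 1 ≤ i ∧ i + 1 ≤ l),
    conj_diag F l n hn hnl t (i-1) (by omega) (i-1)
      (by unfold sig; split_ifs <;> omega) (by omega),
    conj_diag F l n hn hnl t i (by omega) i
      (by unfold sig; split_ifs <;> omega) (by omega)]

lemma L4a (l n : ℕ) (hn : 1 ≤ n) (hnl : n + 2 ≤ l) (t : Fin l → Fˣ) (ho : n % 2 = 1) :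
    rootEval F l (l-1) (wtnMat F l n * torusD F l t * wtnMat F l n)
      = rootEval F l l (torusD F l t) := by
  rw [rootEval, dif_pos ⟨by omega, by omega⟩, rootEval, dif_neg (by omega),
    dif_pos ⟨rfl, by omega⟩,
    conj_diag F l n hn hnl t (l-1-1) (by omega) (l-2)
      (by unfold sig; split_ifs <;> omega) (by omega),
    conj_diag F l n hn hnl t (l-1) (by omega) l
      (by unfold sig; split_ifs <;> omega) (by omega),
    torusD_lt F l t (l-2) (by omega) (l-2) rfl (by omega),
    torusD_ge F l t l (by omega) (by omega) (l-1) (by omega) (by omega),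
    torusD_lt F l t (l-1) (by omega) (l-1) rfl (by omega),
    Units.val_inv_eq_inv_val, div_inv_eq_mul]

lemma L4b (l n : ℕ) (hn : 1 ≤ n) (hnl : n + 2 ≤ l) (t : Fin l → Fˣ) (ho : n % 2 = 1) :
    rootEval F l l (wtnMat F l n * torusD F l t * wtnMat F l n)
      = rootEval F l (l-1) (torusD F l t) := by
  rw [rootEval, dif_neg (by omega), dif_pos ⟨rfl, by omega⟩, rootEval,
    dif_pos ⟨by omega, by omega⟩,
    conj_diag F l n hn hnl t (l-2) (by omega) (l-2)
      (by unfold sig; split_ifs <;> omega) (by omega),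
    conj_diag F l n hn hnl t (l-1) (by omega) l
      (by unfold sig; split_ifs <;> omega) (by omega),
    torusD_lt F l t (l-2) (by omega) (l-2) rfl (by omega),
    torusD_ge F l t l (by omega) (by omega) (l-1) (by omega) (by omega),
    torusD_lt F l t (l-1-1) (by omega) (l-2) (by omega) (by omega),
    torusD_lt F l t (l-1) (by omega) (l-1) rfl (by omega),
    Units.val_inv_eq_inv_val, ← div_eq_mul_inv]

lemma L5a (l n : ℕ) (hn : 1 ≤ n) (hnl : n + 2 ≤ l) (t : Fin l → Fˣ) (he : n % 2 = 0) :
    rootEval F l (l-1) (wtnMat F l n * torusD F l t * wtnMat F l n)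
      = rootEval F l (l-1) (torusD F l t) := by
  rw [rootEval, dif_pos (⟨by omega, by omega⟩ : 1 ≤ l-1 ∧ (l-1) + 1 ≤ l), rootEval,
    dif_pos (⟨by omega, by omega⟩ : 1 ≤ l-1 ∧ (l-1) + 1 ≤ l),
    conj_diag F l n hn hnl t (l-1-1) (by omega) (l-1-1)
      (by unfold sig; split_ifs <;> omega) (by omega),
    conj_diag F l n hn hnl t (l-1) (by omega) (l-1)
      (by unfold sig; split_ifs <;> omega) (by omega)]

lemma L5b (l n : ℕ) (hn : 1 ≤ n) (hnl : n + 2 ≤ l) (t : Fin l → Fˣ) (he : n % 2 = 0) :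
    rootEval F l l (wtnMat F l n * torusD F l t * wtnMat F l n)
      = rootEval F l l (torusD F l t) := by
  rw [rootEval, dif_neg (by omega), dif_pos (⟨rfl, by omega⟩ : l = l ∧ 2 ≤ l), rootEval,
    dif_neg (by omega), dif_pos (⟨rfl, by omega⟩ : l = l ∧ 2 ≤ l),
    conj_diag F l n hn hnl t (l-2) (by omega) (l-2)
      (by unfold sig; split_ifs <;> omega) (by omega),
    conj_diag F l n hn hnl t (l-1) (by omega) (l-1)
      (by unfold sig; split_ifs <;> omega) (by omega)]

end

/-- the action of `w̃_n` (`n ≤ l-2`) on the simple roots of `SO_{2l}`: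
`w̃_n α_i = α_{n-i}` for `1 ≤ i ≤ n-1`; `(w̃_n α_n)(t) = t_1⁻¹ t_{n+1}⁻¹` (negative);
`w̃_n α_i = α_i` for `n+1 ≤ i ≤ l-2`; `w̃_n` swaps `α_{l-1}` and `α_l` when `n` is odd
and fixes them when `n` is even.  Consequently `θ_{w̃_n} = Δ ∖ {α_n}`. -/
theorem statement5 (F : Type*) [Field F] [CharZero F] (l n : ℕ)
    (hn : 1 ≤ n) (hnl : n + 2 ≤ l) :
    (∀ t : Fin l → Fˣ,
      (∀ i : ℕ, 1 ≤ i → i ≤ n - 1 →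
        rootEval F l i (wtnMat F l n * torusD F l t * wtnMat F l n) =
          rootEval F l (n - i) (torusD F l t)) ∧
      (rootEval F l n (wtnMat F l n * torusD F l t * wtnMat F l n) =
        (((t ⟨0, by omega⟩ : Fˣ) : F) * ((t ⟨n, by omega⟩ : Fˣ) : F))⁻¹) ∧
      (∀ i : ℕ, n + 1 ≤ i → i ≤ l - 2 →
        rootEval F l i (wtnMat F l n * torusD F l t * wtnMat F l n) =
          rootEval F l i (torusD F l t)) ∧
      (n % 2 = 1 →
        rootEval F l (l-1) (wtnMat F l n * torusD F l t * wtnMat F l n) =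
            rootEval F l l (torusD F l t) ∧
        rootEval F l l (wtnMat F l n * torusD F l t * wtnMat F l n) =
            rootEval F l (l-1) (torusD F l t)) ∧
      (n % 2 = 0 →
        rootEval F l (l-1) (wtnMat F l n * torusD F l t * wtnMat F l n) =
            rootEval F l (l-1) (torusD F l t) ∧
        rootEval F l l (wtnMat F l n * torusD F l t * wtnMat F l n) =
            rootEval F l l (torusD F l t))) ∧
    (∀ k : ℕ, 1 ≤ k → k ≤ l → k ≠ n → ∃ k', 1 ≤ k' ∧ k' ≤ l ∧
      ∀ t : Fin l → Fˣ,
        rootEval F l k (wtnMat F l n * torusD F l t * wtnMat F l n) =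
          rootEval F l k' (torusD F l t)) := by
  constructor
  · intro t
    exact ⟨fun i h1 h2 => L1 l n hn hnl t i h1 h2,
      L2 l n hn hnl t,
      fun i h1 h2 => L3 l n hn hnl t i h1 h2,
      fun ho => ⟨L4a l n hn hnl t ho, L4b l n hn hnl t ho⟩,
      fun he => ⟨L5a l n hn hnl t he, L5b l n hn hnl t he⟩⟩
  · intro k hk1 hk2 hkn
    rcases Nat.lt_or_ge k n with h | h
    · exact ⟨n - k, by omega, by omega, fun t => L1 l n hn hnl t k hk1 (by omega)⟩
    · have h' : n + 1 ≤ k := by omega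
      rcases Nat.lt_or_ge k (l - 1) with h2 | h2
      · exact ⟨k, hk1, hk2, fun t => L3 l n hn hnl t k h' (by omega)⟩
      · rcases Nat.mod_two_eq_zero_or_one n with he | ho
        · rcases (by omega : k = l - 1 ∨ k = l) with heq | heq
          · exact ⟨l - 1, by omega, by omega, fun t => by
              rw [heq]; exact L5a l n hn hnl t he⟩
          · exact ⟨l, by omega, le_rfl, fun t => by
              rw [heq]; exact L5b l n hn hnl t he⟩
        · rcases (by omega : k = l - 1 ∨ k = l) with heq | heq
          · exact ⟨l, by omega, le_rfl, fun t => by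
              rw [heq]; exact L4a l n hn hnl t ho⟩
          · exact ⟨l - 1, by omega, by omega, fun t => by
              rw [heq]; exact L4b l n hn hnl t ho⟩

end
end

section
/- For positive roots α of SO_{2l}, the intersection of the root subgroup U_α with the compact open subgroup H_m = e_m K_m e_m⁻¹ equals {x_α(x) : x ∈ 𝔭^{−(2ht(α)−1)m}}, and for negative roots −α it equals {x_{−α}(x) : x ∈ 𝔭^{(2ht(α)+1)m}}, where ht(α) denotes the height of α. -/
open Matrix

noncomputable section

def Jmat (F : Type*) [Field F] (n : ℕ) : Matrix (Fin n) (Fin n) F :=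
  Matrix.of fun i j => if (i : ℕ) + (j : ℕ) + 1 = n then 1 else 0

def inSO (F : Type*) [Field F] (n : ℕ) (g : Matrix (Fin n) (Fin n) F) : Prop :=
  g.det = 1 ∧ gᵀ * Jmat F n * g = Jmat F n

/-- The fractional ideal `𝔭^k = {x : v(x) ≥ k}` (for `k : ℤ`) of a discretely
valued field, where `v` is the additive valuation. -/
def pPow (F : Type*) [Field F] (v : F → ℤ) (k : ℤ) : Set F :=
  {x | x = 0 ∨ (x ≠ 0 ∧ k ≤ v x)}

/-- The congruence subgroup `K_m = (I + Mat(𝔭^m)) ∩ SO_{2l}(F)`. -/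
def inKm (F : Type*) [Field F] (v : F → ℤ) (l m : ℕ)
    (g : Matrix (Fin (2*l)) (Fin (2*l)) F) : Prop :=
  inSO F (2*l) g ∧ ∀ i j : Fin (2*l), (g - 1) i j ∈ pPow F v (m : ℤ)

/-- `e_m = diag(ϖ^{-2m(l-1)}, …, ϖ^{-2m}, 1, 1, ϖ^{2m}, …, ϖ^{2m(l-1)})`. -/
def emDiag (F : Type*) [Field F] (ϖ : F) (l m : ℕ) : Matrix (Fin (2*l)) (Fin (2*l)) F :=
  Matrix.diagonal fun i =>
    if (i:ℕ) < l then ϖ ^ (-(2*(m:ℤ)*((l:ℤ)-1-((i:ℕ):ℤ))))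
    else ϖ ^ (2*(m:ℤ)*(((i:ℕ):ℤ)-(l:ℤ)))

/-- `e_m⁻¹`. -/
def emDiagInv (F : Type*) [Field F] (ϖ : F) (l m : ℕ) : Matrix (Fin (2*l)) (Fin (2*l)) F :=
  Matrix.diagonal fun i =>
    if (i:ℕ) < l then ϖ ^ (2*(m:ℤ)*((l:ℤ)-1-((i:ℕ):ℤ)))
    else ϖ ^ (-(2*(m:ℤ)*(((i:ℕ):ℤ)-(l:ℤ))))

/-- The Howe compact open subgroup `H_m = e_m K_m e_m⁻¹`. -/
def inHm (F : Type*) [Field F] (v : F → ℤ) (ϖ : F) (l m : ℕ)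
    (g : Matrix (Fin (2*l)) (Fin (2*l)) F) : Prop :=
  ∃ kk, inKm F v l m kk ∧ g = emDiag F ϖ l m * kk * emDiagInv F ϖ l m

/-- The height of the positive root of `D_l` indexed by `(i,j,ε)` with `i < j`
(0-indexed): `e_{i+1} - e_{j+1}` if `ε = false` (height `j - i`),
`e_{i+1} + e_{j+1}` if `ε = true` (height `2l - i - j - 2`). -/
def htRoot (l : ℕ) (i j : Fin l) (ε : Bool) : ℤ :=
  if ε then 2*(l:ℤ) - ((i:ℕ):ℤ) - ((j:ℕ):ℤ) - 2 else ((j:ℕ):ℤ) - ((i:ℕ):ℤ)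

/-- The standard root group parametrization `x_α : F → U_α ⊂ SO_{2l}` for the positive
root `α` indexed by `(i,j,ε)`, `i < j`:
for `e_i - e_j`: `x_α(s) = I + s(E_{i,j} - E_{2l-1-j,2l-1-i})`;
for `e_i + e_j`: `x_α(s) = I + s(E_{i,2l-1-j} - E_{j,2l-1-i})` (0-indexed). -/
def xroot (F : Type*) [Field F] (l : ℕ) (i j : Fin l) (ε : Bool) (s : F) :
    Matrix (Fin (2*l)) (Fin (2*l)) F :=
  1 + s • (if ε then
      Matrix.single ⟨(i:ℕ), by have := i.isLt; omega⟩
          ⟨2*l-1-(j:ℕ), by have := j.isLt; omega⟩ (1:F)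
        - Matrix.single ⟨(j:ℕ), by have := j.isLt; omega⟩
            ⟨2*l-1-(i:ℕ), by have := i.isLt; omega⟩ (1:F)
    else
      Matrix.single ⟨(i:ℕ), by have := i.isLt; omega⟩
          ⟨(j:ℕ), by have := j.isLt; omega⟩ (1:F)
        - Matrix.single ⟨2*l-1-(j:ℕ), by have := j.isLt; omega⟩
            ⟨2*l-1-(i:ℕ), by have := i.isLt; omega⟩ (1:F))

namespace St8

variable {F : Type*} [Field F]

/-- valuation of 1 -/
lemma v_one (v : F → ℤ) (hmul : ∀ x y : F, x ≠ 0 → y ≠ 0 → v (x*y) = v x + v y) :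
    v 1 = 0 := by
  have h := hmul 1 1 one_ne_zero one_ne_zero
  rw [one_mul] at h
  omega

lemma v_inv (v : F → ℤ) (hmul : ∀ x y : F, x ≠ 0 → y ≠ 0 → v (x*y) = v x + v y)
    (x : F) (hx : x ≠ 0) : v x⁻¹ = - v x := by
  have h := hmul x⁻¹ x (inv_ne_zero hx) hx
  rw [inv_mul_cancel₀ hx, v_one v hmul] at h
  omega

lemma v_pow (v : F → ℤ) (ϖ : F) (hϖ0 : ϖ ≠ 0) (hϖ : v ϖ = 1)
    (hmul : ∀ x y : F, x ≠ 0 → y ≠ 0 → v (x*y) = v x + v y) (n : ℕ) :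
    v (ϖ ^ n) = n := by
  induction n with
  | zero => simpa using v_one v hmul
  | succ n ih =>
    rw [pow_succ, hmul _ _ (pow_ne_zero n hϖ0) hϖ0, ih, hϖ]
    push_cast; ring

lemma v_zpow (v : F → ℤ) (ϖ : F) (hϖ0 : ϖ ≠ 0) (hϖ : v ϖ = 1)
    (hmul : ∀ x y : F, x ≠ 0 → y ≠ 0 → v (x*y) = v x + v y) (k : ℤ) :
    v (ϖ ^ k) = k := by
  cases k with
  | ofNat n => rw [Int.ofNat_eq_coe, zpow_natCast, v_pow v ϖ hϖ0 hϖ hmul]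
  | negSucc n =>
    rw [zpow_negSucc, v_inv v hmul _ (pow_ne_zero _ hϖ0), v_pow v ϖ hϖ0 hϖ hmul]
    simp [Int.negSucc_eq]

lemma v_neg (v : F → ℤ) (hmul : ∀ x y : F, x ≠ 0 → y ≠ 0 → v (x*y) = v x + v y)
    (x : F) (hx : x ≠ 0) : v (-x) = v x := by
  have h1 : v (-1 : F) = 0 := by
    have h := hmul (-1) (-1) (by norm_num) (by norm_num)
    rw [neg_mul_neg, one_mul, v_one v hmul] at h
    omega
  have h := hmul (-1) x (by norm_num) hx
  rw [neg_one_mul] at h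
  omega

lemma pPow_zero (v : F → ℤ) (k : ℤ) : (0:F) ∈ pPow F v k := Or.inl rfl

lemma pPow_neg (v : F → ℤ) (hmul : ∀ x y : F, x ≠ 0 → y ≠ 0 → v (x*y) = v x + v y)
    (k : ℤ) (s : F) (hs : s ∈ pPow F v k) : -s ∈ pPow F v k := by
  rcases hs with rfl | ⟨hs0, hs⟩
  · simp [pPow]
  · exact Or.inr ⟨neg_ne_zero.mpr hs0, by rw [v_neg v hmul s hs0]; exact hs⟩

lemma pPow_shift (v : F → ℤ) (ϖ : F) (hϖ0 : ϖ ≠ 0) (hϖ : v ϖ = 1)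
    (hmul : ∀ x y : F, x ≠ 0 → y ≠ 0 → v (x*y) = v x + v y) (u k : ℤ) (s : F) :
    ϖ ^ u * s ∈ pPow F v k ↔ s ∈ pPow F v (k - u) := by
  by_cases hs : s = 0
  · subst hs; simp [pPow]
  · have hpne : ϖ ^ u ≠ 0 := zpow_ne_zero u hϖ0
    have hne : ϖ ^ u * s ≠ 0 := mul_ne_zero hpne hs
    have hv : v (ϖ ^ u * s) = u + v s := by
      rw [hmul _ _ hpne hs, v_zpow v ϖ hϖ0 hϖ hmul]
    constructor
    · rintro (h | ⟨-, h⟩)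
      · exact absurd h hne
      · exact Or.inr ⟨hs, by omega⟩
    · rintro (h | ⟨-, h⟩)
      · exact absurd h hs
      · exact Or.inr ⟨hne, by omega⟩

/-- products with the antidiagonal matrix J -/
lemma J_mul_std {n : ℕ} (p q p' : Fin n) (r : F) (hp' : (p':ℕ) + (p:ℕ) + 1 = n) :
    Jmat F n * Matrix.single p q r = Matrix.single p' q r := by
  ext x y
  rw [Matrix.mul_apply, Finset.sum_eq_single p]
  · have hx := x.isLt
    have hiff : ((x:ℕ) + (p:ℕ) + 1 = n) ↔ p' = x := by
      rw [Fin.ext_iff]; omega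
    simp only [Jmat, Matrix.single, Matrix.of_apply]
    by_cases h : p' = x
    · rw [if_pos (hiff.mpr h)]
      by_cases hy : q = y
      · simp [h, hy]
      · simp [h, hy]
    · rw [if_neg (fun hh => h (hiff.mp hh))]
      simp [h]
  · intro t _ htp
    simp only [Matrix.single, Matrix.of_apply]
    rw [if_neg (fun hh => htp hh.1.symm)]
    exact mul_zero _
  · intro hp; exact absurd (Finset.mem_univ p) hp

lemma std_mul_J {n : ℕ} (p q q' : Fin n) (r : F) (hq' : (q:ℕ) + (q':ℕ) + 1 = n) :
    Matrix.single p q r * Jmat F n = Matrix.single p q' r := by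
  ext x y
  rw [Matrix.mul_apply, Finset.sum_eq_single q]
  · have hy := y.isLt
    have hiff : ((q:ℕ) + (y:ℕ) + 1 = n) ↔ q' = y := by
      rw [Fin.ext_iff]; omega
    simp only [Jmat, Matrix.single, Matrix.of_apply]
    by_cases h : q' = y
    · rw [if_pos (hiff.mpr h)]
      by_cases hx : p = x
      · simp [h, hx]
      · simp [h, hx]
    · rw [if_neg (fun hh => h (hiff.mp hh))]
      simp [h]
  · intro t _ htq
    simp only [Matrix.single, Matrix.of_apply]
    rw [if_neg (fun hh => htq hh.2.symm)]
    exact zero_mul _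
  · intro hq; exact absurd (Finset.mem_univ q) hq

lemma stdT {n : ℕ} (p q : Fin n) (r : F) :
    (Matrix.single p q r)ᵀ = Matrix.single q p r := by
  ext x y
  simp only [Matrix.transpose_apply, Matrix.single, Matrix.of_apply]
  congr 1
  exact propext and_comm

def wt (l m : ℕ) (p : Fin (2*l)) : ℤ :=
  if (p:ℕ) < l then -(2*(m:ℤ)*((l:ℤ)-1-((p:ℕ):ℤ))) else 2*(m:ℤ)*(((p:ℕ):ℤ)-(l:ℤ))

lemma wt_of_lt (l m : ℕ) (p : Fin (2*l)) (h : (p:ℕ) < l) :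
    wt l m p = -(2*(m:ℤ)*((l:ℤ)-1-((p:ℕ):ℤ))) := by simp [wt, h]

lemma wt_of_ge (l m : ℕ) (p : Fin (2*l)) (h : ¬ ((p:ℕ) < l)) :
    wt l m p = 2*(m:ℤ)*(((p:ℕ):ℤ)-(l:ℤ)) := by simp [wt, h]

lemma emDiag_eq (F : Type*) [Field F] (ϖ : F) (l m : ℕ) :
    emDiag F ϖ l m = Matrix.diagonal fun p => ϖ ^ wt l m p := by
  unfold emDiag
  funext p
  simp only [wt, apply_ite (fun k : ℤ => ϖ ^ k)]

lemma emDiagInv_eq (F : Type*) [Field F] (ϖ : F) (l m : ℕ) :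
    emDiagInv F ϖ l m = Matrix.diagonal fun p => ϖ ^ (-(wt l m p)) := by
  unfold emDiagInv
  funext p
  simp only [wt, apply_ite (Neg.neg : ℤ → ℤ), apply_ite (fun k : ℤ => ϖ ^ k), neg_neg]

def Xm {F : Type*} [Field F] {n : ℕ} (a b a' b' : Fin n) (s : F) :
    Matrix (Fin n) (Fin n) F :=
  1 + s • (Matrix.single a b (1:F) - Matrix.single a' b' (1:F))

lemma Xm_apply {n : ℕ} (a b a' b' : Fin n) (s : F) (p q : Fin n) :
    Xm a b a' b' s p q = (if p = q then (1:F) else 0)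
      + s * ((if a = p ∧ b = q then 1 else 0) - (if a' = p ∧ b' = q then 1 else 0)) := by
  simp only [Xm, Matrix.add_apply, Matrix.one_apply, Matrix.smul_apply, Matrix.sub_apply,
    Matrix.single, Matrix.of_apply, smul_eq_mul]

lemma diag_conj {n : ℕ} (d d' : Fin n → F) (a b a' b' : Fin n)
    (hdd : ∀ p, d p * d' p = 1) (hab : a ≠ b) (ha'b' : a' ≠ b') (haa' : a ≠ a')
    (c s : F) (hc : d a * d' b = c) (hc' : d a' * d' b' = c) :
    Matrix.diagonal d * Xm a b a' b' s * Matrix.diagonal d' = Xm a b a' b' (c * s) := by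
  ext p q
  rw [Matrix.mul_diagonal, Matrix.diagonal_mul, Xm_apply, Xm_apply]
  by_cases h2 : a = p ∧ b = q
  · obtain ⟨rfl, rfl⟩ := h2
    rw [if_neg hab, if_neg (fun h : a' = a ∧ b' = b => haa' h.1.symm), if_pos ⟨rfl, rfl⟩]
    linear_combination s * hc
  · by_cases h3 : a' = p ∧ b' = q
    · obtain ⟨rfl, rfl⟩ := h3
      rw [if_neg ha'b', if_neg h2, if_pos ⟨rfl, rfl⟩]
      linear_combination (-s) * hc'
    · by_cases h1 : p = q
      · subst h1
        rw [if_pos rfl, if_neg h2, if_neg h3]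
        linear_combination hdd p
      · rw [if_neg h1, if_neg h2, if_neg h3]
        ring

theorem aux (F : Type*) [Field F] (v : F → ℤ) (ϖ : F)
    (hϖ0 : ϖ ≠ 0) (hϖ : v ϖ = 1)
    (hmul : ∀ x y : F, x ≠ 0 → y ≠ 0 → v (x*y) = v x + v y)
    (l m : ℕ) (a b a' b' : Fin (2*l))
    (hab : (a:ℕ) < (b:ℕ)) (habl : (a:ℕ) + (b:ℕ) + 1 < 2*l)
    (ha'v : (a':ℕ) = 2*l-1-(b:ℕ)) (hb'v : (b':ℕ) = 2*l-1-(a:ℕ))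
    (t : ℤ) (hta : wt l m b - wt l m a = t) :
    (∀ g : Matrix (Fin (2*l)) (Fin (2*l)) F,
      (inHm F v ϖ l m g ∧ ∃ s : F, g = Xm a b a' b' s) ↔
      (∃ s : F, s ∈ pPow F v ((m:ℤ) - t) ∧ g = Xm a b a' b' s)) ∧
    (∀ g : Matrix (Fin (2*l)) (Fin (2*l)) F,
      (inHm F v ϖ l m g ∧ ∃ s : F, g = (Xm a b a' b' s)ᵀ) ↔
      (∃ s : F, s ∈ pPow F v (t + (m:ℤ)) ∧ g = (Xm a b a' b' s)ᵀ)) := by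
  have ha2 := a.isLt
  have hb2 := b.isLt
  -- Fin-level distinctness facts
  have hfab : a ≠ b := Fin.ne_of_val_ne (by omega)
  have hfba : b ≠ a := Fin.ne_of_val_ne (by omega)
  have hfa'b' : a' ≠ b' := Fin.ne_of_val_ne (by omega)
  have hfb'a' : b' ≠ a' := Fin.ne_of_val_ne (by omega)
  have hfaa' : a ≠ a' := Fin.ne_of_val_ne (by omega)
  have hfba' : b ≠ a' := Fin.ne_of_val_ne (by omega)
  have hfb'a : b' ≠ a := Fin.ne_of_val_ne (by omega)
  have hfa'b : a' ≠ b := Fin.ne_of_val_ne (by omega)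
  have hfab' : a ≠ b' := Fin.ne_of_val_ne (by omega)
  -- transpose of the nilpotent part
  have hNT : (Matrix.single a b (1:F) - Matrix.single a' b' (1:F))ᵀ
      = Matrix.single b a (1:F) - Matrix.single b' a' (1:F) := by
    rw [Matrix.transpose_sub, stdT, stdT]
  -- J-products
  have hNTJ : (Matrix.single b a (1:F) - Matrix.single b' a' 1) * Jmat F (2*l)
      = Matrix.single b b' 1 - Matrix.single b' b 1 := by
    rw [sub_mul, std_mul_J b a b' 1 (by omega), std_mul_J b' a' b 1 (by omega)]
  have hJN : Jmat F (2*l) * (Matrix.single a b (1:F) - Matrix.single a' b' 1)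
      = Matrix.single b' b 1 - Matrix.single b b' 1 := by
    rw [mul_sub, J_mul_std a b b' 1 (by omega), J_mul_std a' b' b 1 (by omega)]
  have hNJ : (Matrix.single a b (1:F) - Matrix.single a' b' 1) * Jmat F (2*l)
      = Matrix.single a a' 1 - Matrix.single a' a 1 := by
    rw [sub_mul, std_mul_J a b a' 1 (by omega), std_mul_J a' b' a 1 (by omega)]
  have hJNT : Jmat F (2*l) * (Matrix.single b a (1:F) - Matrix.single b' a' 1)
      = Matrix.single a' a 1 - Matrix.single a a' 1 := by
    rw [mul_sub, J_mul_std b a a' 1 (by omega), J_mul_std b' a' a 1 (by omega)]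
  have hzero1 : (Matrix.single b b' (1:F) - Matrix.single b' b 1)
      * (Matrix.single a b (1:F) - Matrix.single a' b' 1) = 0 := by
    rw [sub_mul, mul_sub, mul_sub,
      Matrix.single_mul_single_of_ne _ _ _ _ hfb'a, Matrix.single_mul_single_of_ne _ _ _ _ hfb'a',
      Matrix.single_mul_single_of_ne _ _ _ _ hfba, Matrix.single_mul_single_of_ne _ _ _ _ hfba']
    simp
  have hzero2 : (Matrix.single a a' (1:F) - Matrix.single a' a 1)
      * (Matrix.single b a (1:F) - Matrix.single b' a' 1) = 0 := by
    rw [sub_mul, mul_sub, mul_sub,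
      Matrix.single_mul_single_of_ne _ _ _ _ hfa'b, Matrix.single_mul_single_of_ne _ _ _ _ hfa'b',
      Matrix.single_mul_single_of_ne _ _ _ _ hfab, Matrix.single_mul_single_of_ne _ _ _ _ hfab']
    simp
  -- expansion of products of the form (1+sP)J(1+sQ)
  have hexpand : ∀ (P Q : Matrix (Fin (2*l)) (Fin (2*l)) F) (s : F),
      (1 + s • P) * Jmat F (2*l) * (1 + s • Q)
        = Jmat F (2*l) + s • (P * Jmat F (2*l) + Jmat F (2*l) * Q)
          + (s*s) • (P * Jmat F (2*l) * Q) := by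
    intro P Q s
    simp only [add_mul, mul_add, one_mul, mul_one, Matrix.smul_mul, Matrix.mul_smul,
      smul_add, smul_smul]
    abel
  -- orthogonality
  have hJ1 : ∀ s : F, (Xm a b a' b' s)ᵀ * Jmat F (2*l) * Xm a b a' b' s = Jmat F (2*l) := by
    intro s
    have hX : Xm a b a' b' s
        = 1 + s • (Matrix.single a b (1:F) - Matrix.single a' b' 1) := rfl
    rw [hX, Matrix.transpose_add, Matrix.transpose_one, Matrix.transpose_smul, hNT,
      hexpand, hNTJ, hJN, hzero1]
    have hz : (Matrix.single b b' (1:F) - Matrix.single b' b 1)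
        + (Matrix.single b' b 1 - Matrix.single b b' 1) = 0 := by abel
    rw [hz]
    simp
  have hJ2 : ∀ s : F, Xm a b a' b' s * Jmat F (2*l) * (Xm a b a' b' s)ᵀ = Jmat F (2*l) := by
    intro s
    have hX : Xm a b a' b' s
        = 1 + s • (Matrix.single a b (1:F) - Matrix.single a' b' 1) := rfl
    conv_lhs => rw [hX, Matrix.transpose_add, Matrix.transpose_one, Matrix.transpose_smul, hNT]
    rw [hexpand, hNJ, hJNT, hzero2]
    have hz : (Matrix.single a a' (1:F) - Matrix.single a' a 1)
        + (Matrix.single a' a 1 - Matrix.single a a' 1) = 0 := by abel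
    rw [hz]
    simp
  -- triangularity and determinant
  have ha'b : (a':ℕ) < (b':ℕ) := by omega
  have hBT : ∀ s : F, Matrix.BlockTriangular (Xm a b a' b' s) id := by
    intro s p q hqp
    have hqp' : (q:ℕ) < (p:ℕ) := hqp
    have h1 : ¬ (p = q) := fun h => by rw [h] at hqp'; omega
    have h2 : ¬ (a = p ∧ b = q) := fun h => by
      have e1 : (a:ℕ) = (p:ℕ) := congrArg Fin.val h.1
      have e2 : (b:ℕ) = (q:ℕ) := congrArg Fin.val h.2
      omega
    have h3 : ¬ (a' = p ∧ b' = q) := fun h => by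
      have e1 : (a':ℕ) = (p:ℕ) := congrArg Fin.val h.1
      have e2 : (b':ℕ) = (q:ℕ) := congrArg Fin.val h.2
      omega
    rw [Xm_apply, if_neg h1, if_neg h2, if_neg h3]
    ring
  have hdet : ∀ s : F, (Xm a b a' b' s).det = 1 := by
    intro s
    rw [Matrix.det_of_upperTriangular (hBT s)]
    apply Finset.prod_eq_one
    intro p _
    rw [Xm_apply, if_pos rfl, if_neg (fun h : a = p ∧ b = p => hfab (h.1.trans h.2.symm)),
      if_neg (fun h : a' = p ∧ b' = p => hfa'b' (h.1.trans h.2.symm))]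
    ring
  have hSO : ∀ s : F, inSO F (2*l) (Xm a b a' b' s) := fun s => ⟨hdet s, hJ1 s⟩
  have hSOT : ∀ s : F, inSO F (2*l) ((Xm a b a' b' s)ᵀ) := fun s =>
    ⟨by rw [Matrix.det_transpose]; exact hdet s,
     by rw [Matrix.transpose_transpose]; exact hJ2 s⟩
  -- entries
  have hent : ∀ s : F, s ∈ pPow F v (m:ℤ) →
      ∀ p q, (Xm a b a' b' s - 1) p q ∈ pPow F v (m:ℤ) := by
    intro s hs p q
    have h : (Xm a b a' b' s - 1) p q
        = s * ((if a = p ∧ b = q then (1:F) else 0) - (if a' = p ∧ b' = q then 1 else 0)) := by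
      rw [Matrix.sub_apply, Xm_apply, Matrix.one_apply]
      ring
    rw [h]
    by_cases h2 : a = p ∧ b = q
    · by_cases h3 : a' = p ∧ b' = q
      · rw [if_pos h2, if_pos h3]
        simpa using pPow_zero v (m:ℤ)
      · rw [if_pos h2, if_neg h3]
        simpa using hs
    · by_cases h3 : a' = p ∧ b' = q
      · rw [if_neg h2, if_pos h3]
        simpa using pPow_neg v hmul (m:ℤ) s hs
      · rw [if_neg h2, if_neg h3]
        simpa using pPow_zero v (m:ℤ)
  have hTsub : ∀ s : F, (Xm a b a' b' s)ᵀ - 1 = (Xm a b a' b' s - 1)ᵀ := by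
    intro s
    rw [Matrix.transpose_sub, Matrix.transpose_one]
  have hKm : ∀ s : F, s ∈ pPow F v (m:ℤ) → inKm F v l m (Xm a b a' b' s) :=
    fun s hs => ⟨hSO s, hent s hs⟩
  have hKmT : ∀ s : F, s ∈ pPow F v (m:ℤ) → inKm F v l m ((Xm a b a' b' s)ᵀ) := by
    intro s hs
    refine ⟨hSOT s, fun p q => ?_⟩
    rw [hTsub, Matrix.transpose_apply]
    exact hent s hs q p
  -- the conjugation scalars
  have hE := emDiag_eq F ϖ l m
  have hEi := emDiagInv_eq F ϖ l m
  have hdd1 : ∀ p : Fin (2*l), ϖ ^ (-(wt l m p)) * ϖ ^ (wt l m p) = 1 := by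
    intro p
    rw [← zpow_add₀ hϖ0]
    norm_num
  have hdd2 : ∀ p : Fin (2*l), ϖ ^ (wt l m p) * ϖ ^ (-(wt l m p)) = 1 := by
    intro p
    rw [← zpow_add₀ hϖ0]
    norm_num
  have hal : (a:ℕ) < l := by omega
  have hb'l : ¬ ((b':ℕ) < l) := by omega
  have hwb' : wt l m b' = -(wt l m a) := by
    have hc : ((b':ℕ):ℤ) = 2*(l:ℤ) - 1 - ((a:ℕ):ℤ) := by omega
    rw [wt_of_ge l m b' hb'l, wt_of_lt l m a hal, hc]
    ring
  have hwa' : wt l m a' = -(wt l m b) := by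
    have hc : ((a':ℕ):ℤ) = 2*(l:ℤ) - 1 - ((b:ℕ):ℤ) := by omega
    rcases Nat.lt_or_ge (b:ℕ) l with h | h
    · have h1 : ¬ ((a':ℕ) < l) := by omega
      rw [wt_of_ge l m a' h1, wt_of_lt l m b h, hc]
      ring
    · have h1 : (a':ℕ) < l := by omega
      rw [wt_of_lt l m a' h1, wt_of_ge l m b (Nat.not_lt.mpr h), hc]
      ring
  have hzp : ∀ x y u : ℤ, x + y = u → ϖ ^ x * ϖ ^ y = ϖ ^ u := fun x y u h => by
    rw [← zpow_add₀ hϖ0, h]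
  have hc1 : ϖ ^ (-(wt l m a)) * ϖ ^ (wt l m b) = ϖ ^ t := hzp _ _ _ (by omega)
  have hc1' : ϖ ^ (-(wt l m a')) * ϖ ^ (wt l m b') = ϖ ^ t := by
    rw [hwa', hwb', neg_neg]
    exact hzp _ _ _ (by omega)
  have hc2 : ϖ ^ (wt l m a) * ϖ ^ (-(wt l m b)) = ϖ ^ (-t) := hzp _ _ _ (by omega)
  have hc2' : ϖ ^ (wt l m a') * ϖ ^ (-(wt l m b')) = ϖ ^ (-t) := by
    rw [hwa', hwb', neg_neg]
    exact hzp _ _ _ (by omega)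
  have hconj1 : ∀ s : F, emDiagInv F ϖ l m * Xm a b a' b' s * emDiag F ϖ l m
      = Xm a b a' b' (ϖ ^ t * s) := by
    intro s
    rw [hE, hEi]
    exact diag_conj _ _ a b a' b' hdd1 hfab hfa'b' hfaa' (ϖ ^ t) s hc1 hc1'
  have hconj2 : ∀ s : F, emDiag F ϖ l m * Xm a b a' b' s * emDiagInv F ϖ l m
      = Xm a b a' b' (ϖ ^ (-t) * s) := by
    intro s
    rw [hE, hEi]
    exact diag_conj _ _ a b a' b' hdd2 hfab hfa'b' hfaa' (ϖ ^ (-t)) s hc2 hc2'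
  have heie : emDiagInv F ϖ l m * emDiag F ϖ l m = 1 := by
    rw [hE, hEi, Matrix.diagonal_mul_diagonal,
      show (fun i => ϖ ^ (-(wt l m i)) * ϖ ^ (wt l m i)) = fun _ : Fin (2*l) => (1:F) from
        funext hdd1, Matrix.diagonal_one]
  have hEt : (emDiag F ϖ l m)ᵀ = emDiag F ϖ l m := by rw [hE, Matrix.diagonal_transpose]
  have hEit : (emDiagInv F ϖ l m)ᵀ = emDiagInv F ϖ l m := by rw [hEi, Matrix.diagonal_transpose]
  have hconjT1 : ∀ s : F, emDiagInv F ϖ l m * (Xm a b a' b' s)ᵀ * emDiag F ϖ l m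
      = (Xm a b a' b' (ϖ ^ (-t) * s))ᵀ := by
    intro s
    rw [← hconj2 s, Matrix.transpose_mul, Matrix.transpose_mul, hEt, hEit, Matrix.mul_assoc]
  have hconjT2 : ∀ s : F, emDiag F ϖ l m * (Xm a b a' b' s)ᵀ * emDiagInv F ϖ l m
      = (Xm a b a' b' (ϖ ^ t * s))ᵀ := by
    intro s
    rw [← hconj1 s, Matrix.transpose_mul, Matrix.transpose_mul, hEt, hEit, Matrix.mul_assoc]
  have hextract : ∀ kk g : Matrix (Fin (2*l)) (Fin (2*l)) F,
      g = emDiag F ϖ l m * kk * emDiagInv F ϖ l m →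
      kk = emDiagInv F ϖ l m * g * emDiag F ϖ l m := by
    intro kk g hg
    subst hg
    rw [show emDiagInv F ϖ l m * (emDiag F ϖ l m * kk * emDiagInv F ϖ l m) * emDiag F ϖ l m
        = (emDiagInv F ϖ l m * emDiag F ϖ l m) * kk * (emDiagInv F ϖ l m * emDiag F ϖ l m) from
      by noncomm_ring, heie, one_mul, mul_one]
  have hentab : ∀ s : F, (Xm a b a' b' s - 1) a b = s := by
    intro s
    rw [Matrix.sub_apply, Xm_apply, Matrix.one_apply, if_neg hfab, if_pos ⟨rfl, rfl⟩,
      if_neg (fun h : a' = a ∧ b' = b => hfaa' h.1.symm)]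
    ring
  constructor
  · -- positive root
    intro g
    constructor
    · rintro ⟨⟨kk, hkkK, hg⟩, s, rfl⟩
      have hk : kk = Xm a b a' b' (ϖ ^ t * s) := by
        rw [hextract kk _ hg, hconj1 s]
      have hmem := hkkK.2 a b
      rw [hk, hentab] at hmem
      exact ⟨s, (pPow_shift v ϖ hϖ0 hϖ hmul t (m:ℤ) s).mp hmem, rfl⟩
    · rintro ⟨s, hs, rfl⟩
      refine ⟨⟨Xm a b a' b' (ϖ ^ t * s),
        hKm _ ((pPow_shift v ϖ hϖ0 hϖ hmul t (m:ℤ) s).mpr hs), ?_⟩, s, rfl⟩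
      rw [hconj2 (ϖ ^ t * s)]
      rw [← mul_assoc, ← zpow_add₀ hϖ0]
      norm_num
  · -- negative root
    intro g
    constructor
    · rintro ⟨⟨kk, hkkK, hg⟩, s, rfl⟩
      have hk : kk = (Xm a b a' b' (ϖ ^ (-t) * s))ᵀ := by
        rw [hextract kk _ hg, hconjT1 s]
      have hmem := hkkK.2 b a
      rw [hk, hTsub, Matrix.transpose_apply, hentab] at hmem
      have h2 := (pPow_shift v ϖ hϖ0 hϖ hmul (-t) (m:ℤ) s).mp hmem
      rw [show (m:ℤ) - -t = t + (m:ℤ) from by ring] at h2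
      exact ⟨s, h2, rfl⟩
    · rintro ⟨s, hs, rfl⟩
      refine ⟨⟨(Xm a b a' b' (ϖ ^ (-t) * s))ᵀ, hKmT _ ?_, ?_⟩, s, rfl⟩
      · apply (pPow_shift v ϖ hϖ0 hϖ hmul (-t) (m:ℤ) s).mpr
        rw [show (m:ℤ) - -t = t + (m:ℤ) from by ring]
        exact hs
      · rw [hconjT2 (ϖ ^ (-t) * s)]
        rw [← mul_assoc, ← zpow_add₀ hϖ0]
        norm_num

end St8

/-- for a positive root `α` of `SO_{2l}` of height `ht(α)`,
`U_α ∩ H_m = {x_α(x) : x ∈ 𝔭^{-(2ht(α)-1)m}}` and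
`U_{-α} ∩ H_m = {x_{-α}(x) : x ∈ 𝔭^{(2ht(α)+1)m}}` (the negative root group being
given by transposes). -/
theorem statement8 (F : Type*) [Field F] (v : F → ℤ) (ϖ : F)
    (hϖ0 : ϖ ≠ 0) (hϖ : v ϖ = 1)
    (hmul : ∀ x y : F, x ≠ 0 → y ≠ 0 → v (x*y) = v x + v y)
    (hadd : ∀ x y : F, x ≠ 0 → y ≠ 0 → x + y ≠ 0 → min (v x) (v y) ≤ v (x+y))
    (l m : ℕ) (hl : 2 ≤ l) (hm : 1 ≤ m) :
    ∀ (i j : Fin l), (i:ℕ) < (j:ℕ) → ∀ ε : Bool,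
      ({g | inHm F v ϖ l m g ∧ ∃ s : F, g = xroot F l i j ε s} =
        {g | ∃ s : F, s ∈ pPow F v (-(2*htRoot l i j ε - 1)*(m:ℤ)) ∧
          g = xroot F l i j ε s}) ∧
      ({g | inHm F v ϖ l m g ∧ ∃ s : F, g = (xroot F l i j ε s)ᵀ} =
        {g | ∃ s : F, s ∈ pPow F v ((2*htRoot l i j ε + 1)*(m:ℤ)) ∧
          g = (xroot F l i j ε s)ᵀ}) := by
  intro i j hij ε
  have hil := i.isLt
  have hjl := j.isLt
  cases ε
  · -- ε = false : root e_i - e_j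
    have h := St8.aux F v ϖ hϖ0 hϖ hmul l m
      ⟨(i:ℕ), by omega⟩ ⟨(j:ℕ), by omega⟩
      ⟨2*l-1-(j:ℕ), by omega⟩ ⟨2*l-1-(i:ℕ), by omega⟩
      hij (show (i:ℕ) + (j:ℕ) + 1 < 2*l by omega) rfl rfl
      (2*(m:ℤ)*(((j:ℕ):ℤ) - ((i:ℕ):ℤ)))
      (by
        rw [St8.wt_of_lt l m _ hjl, St8.wt_of_lt l m _ hil]
        show -(2*(m:ℤ)*((l:ℤ)-1-((j:ℕ):ℤ))) - -(2*(m:ℤ)*((l:ℤ)-1-((i:ℕ):ℤ))) = _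
        ring)
    have hxr : ∀ s : F, xroot F l i j false s
        = St8.Xm (⟨(i:ℕ), by omega⟩ : Fin (2*l)) ⟨(j:ℕ), by omega⟩
          ⟨2*l-1-(j:ℕ), by omega⟩ ⟨2*l-1-(i:ℕ), by omega⟩ s := fun s => rfl
    have hexp1 : -(2*htRoot l i j false - 1)*(m:ℤ)
        = (m:ℤ) - 2*(m:ℤ)*(((j:ℕ):ℤ) - ((i:ℕ):ℤ)) := by
      simp only [htRoot, Bool.false_eq_true, if_false]
      ring
    have hexp2 : (2*htRoot l i j false + 1)*(m:ℤ)
        = 2*(m:ℤ)*(((j:ℕ):ℤ) - ((i:ℕ):ℤ)) + (m:ℤ) := by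
      simp only [htRoot, Bool.false_eq_true, if_false]
      ring
    constructor
    · ext g
      simp only [Set.mem_setOf_eq, hxr, hexp1]
      exact h.1 g
    · ext g
      simp only [Set.mem_setOf_eq, hxr, hexp2]
      exact h.2 g
  · -- ε = true : root e_i + e_j
    have hcast : ((2*l-1-(j:ℕ) : ℕ):ℤ) = 2*(l:ℤ) - 1 - ((j:ℕ):ℤ) := by omega
    have h := St8.aux F v ϖ hϖ0 hϖ hmul l m
      ⟨(i:ℕ), by omega⟩ ⟨2*l-1-(j:ℕ), by omega⟩
      ⟨(j:ℕ), by omega⟩ ⟨2*l-1-(i:ℕ), by omega⟩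
      (show (i:ℕ) < 2*l-1-(j:ℕ) by omega)
      (show (i:ℕ) + (2*l-1-(j:ℕ)) + 1 < 2*l by omega)
      (show (j:ℕ) = 2*l-1-(2*l-1-(j:ℕ)) by omega) rfl
      (2*(m:ℤ)*(2*(l:ℤ) - ((i:ℕ):ℤ) - ((j:ℕ):ℤ) - 2))
      (by
        rw [St8.wt_of_ge l m _ (show ¬ ((2*l-1-(j:ℕ)) < l) from by omega),
          St8.wt_of_lt l m _ hil]
        show 2*(m:ℤ)*(((2*l-1-(j:ℕ) : ℕ):ℤ)-(l:ℤ)) - -(2*(m:ℤ)*((l:ℤ)-1-((i:ℕ):ℤ))) = _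
        rw [hcast]
        ring)
    have hxr : ∀ s : F, xroot F l i j true s
        = St8.Xm (⟨(i:ℕ), by omega⟩ : Fin (2*l)) ⟨2*l-1-(j:ℕ), by omega⟩
          ⟨(j:ℕ), by omega⟩ ⟨2*l-1-(i:ℕ), by omega⟩ s := fun s => rfl
    have hexp1 : -(2*htRoot l i j true - 1)*(m:ℤ)
        = (m:ℤ) - 2*(m:ℤ)*(2*(l:ℤ) - ((i:ℕ):ℤ) - ((j:ℕ):ℤ) - 2) := by
      simp only [htRoot, if_true]
      ring
    have hexp2 : (2*htRoot l i j true + 1)*(m:ℤ)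
        = 2*(m:ℤ)*(2*(l:ℤ) - ((i:ℕ):ℤ) - ((j:ℕ):ℤ) - 2) + (m:ℤ) := by
      simp only [htRoot, if_true]
      ring
    constructor
    · ext g
      simp only [Set.mem_setOf_eq, hxr, hexp1]
      exact h.1 g
    · ext g
      simp only [Set.mem_setOf_eq, hxr, hexp2]
      exact h.2 g

end
end

section
/- Let u^+ ∈ S_k^+ ∩ U_m and u_0 ∈ N_k with u_0 ∉ N_k ∩ U_m. Then (u^+)⁻¹ u_0 u^+ ∈ N_k and (u^+)⁻¹ u_0 u^+ ∉ N_k ∩ U_m. In other words, conjugation by elements of S_k^+ ∩ U_m preserves the complement N_k \ (N_k ∩ U_m). -/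
/-!
For the partition `(k, 2l-2k, k)` of the indices, `N_k` consists of the `g ∈ SO_{2l}` with
`g - 1` strictly block upper triangular. Strictly block upper triangular matrices form a
two-sided ideal in the block upper triangular ones, and an upper triangular matrix and its
inverse are block upper triangular, so `u⁻¹ N_k u ⊆ N_k` for every `u ∈ U`.

`H_m = e_m K_m e_m⁻¹` is a group: `K_m` is closed under products by the ultrametric inequality,
since `ab - 1 = (a - 1)(b - 1) + (a - 1) + (b - 1)`, and under inverses, since `a⁻¹ = J aᵀ J`
on `SO_{2l}`. So if `(u⁺)⁻¹ u₀ u⁺` were in `U_m`, then `u₀ = u⁺ ((u⁺)⁻¹ u₀ u⁺) (u⁺)⁻¹` would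
be in `H_m`, and with `N_k ⊆ U` in `U_m`.
-/

open Matrix

noncomputable section

/-- Upper triangular unipotent. -/
def isUUT (F : Type*) [Field F] (N : ℕ) (g : Matrix (Fin N) (Fin N) F) : Prop :=
  (∀ i, g i i = 1) ∧ ∀ i j : Fin N, (j:ℕ) < (i:ℕ) → g i j = 0

/-- The maximal unipotent subgroup `U = U_{SO_{2l}}`. -/
def inU (F : Type*) [Field F] (l : ℕ) (g : Matrix (Fin (2*l)) (Fin (2*l)) F) : Prop :=
  inSO F (2*l) g ∧ isUUT F (2*l) g

/-- `U_m = U ∩ H_m`. -/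
def inUm (F : Type*) [Field F] (v : F → ℤ) (ϖ : F) (l m : ℕ)
    (g : Matrix (Fin (2*l)) (Fin (2*l)) F) : Prop :=
  inU F l g ∧ inHm F v ϖ l m g

/-- The unipotent radical `N_k` of the standard maximal parabolic `P_k = M_k N_k`
with Levi `M_k ≅ GL_k × SO_{2(l-k)}`. -/
def inNk (F : Type*) [Field F] (l k : ℕ) (g : Matrix (Fin (2*l)) (Fin (2*l)) F) : Prop :=
  inSO F (2*l) g ∧
  ∀ i j : Fin (2*l),
    ¬(((i:ℕ) < k ∧ k ≤ (j:ℕ)) ∨ ((i:ℕ) < 2*l-k ∧ 2*l-k ≤ (j:ℕ))) →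
      g i j = (if i = j then 1 else 0)

/-- Block index for the partition `(k, 2l-2k, k)`. -/
def blk3 (l k x : ℕ) : ℕ := if x < k then 0 else if x < 2*l-k then 1 else 2

/-- `S_k^+ = {diag(u_1, u_2, u_1*) : u_1 ∈ U_{GL_k}, u_2 ∈ U_{SO_{2(l-k)}}}`. -/
def inSkPlus (F : Type*) [Field F] (l k : ℕ)
    (g : Matrix (Fin (2*l)) (Fin (2*l)) F) : Prop :=
  inSO F (2*l) g ∧ isUUT F (2*l) g ∧
  ∀ i j : Fin (2*l), blk3 l k (i:ℕ) ≠ blk3 l k (j:ℕ) → g i j = 0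

section Jmat

variable {F : Type*} [Field F] {n : ℕ}

lemma Jmat_eq_toMatrix_revPerm :
    Jmat F n = (Fin.revPerm : Equiv.Perm (Fin n)).toPEquiv.toMatrix := by
  ext i j
  rw [PEquiv.toMatrix_toPEquiv_apply, Pi.single_apply, Jmat, of_apply, Fin.revPerm_apply]
  congr 1
  apply propext
  rw [Fin.ext_iff, Fin.val_rev]
  omega

lemma Jmat_mul_mul_Jmat (X : Matrix (Fin n) (Fin n) F) :
    Jmat F n * X * Jmat F n = X.submatrix Fin.rev Fin.rev := by
  rw [Jmat_eq_toMatrix_revPerm, PEquiv.toMatrix_toPEquiv_mul, PEquiv.mul_toMatrix_toPEquiv]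
  rfl

lemma Jmat_mul_Jmat : Jmat F n * Jmat F n = 1 := by
  calc Jmat F n * Jmat F n = Jmat F n * 1 * Jmat F n := by rw [mul_one]
    _ = 1 := by rw [Jmat_mul_mul_Jmat]; ext i j; simp [one_apply]

end Jmat

section SO

variable {F : Type*} [Field F] {n : ℕ} {g h : Matrix (Fin n) (Fin n) F}

lemma inSO.isUnit_det (hg : inSO F n g) : IsUnit g.det := by
  rw [hg.1]; exact isUnit_one

lemma inSO.inv_eq (hg : inSO F n g) : g⁻¹ = Jmat F n * gᵀ * Jmat F n :=
  inv_eq_left_inv <| by rw [mul_assoc, mul_assoc, ← mul_assoc gᵀ, hg.2, Jmat_mul_Jmat]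

lemma inSO_mul (hg : inSO F n g) (hh : inSO F n h) : inSO F n (g * h) := by
  refine ⟨by rw [det_mul, hg.1, hh.1, one_mul], ?_⟩
  calc (g * h)ᵀ * Jmat F n * (g * h) = hᵀ * (gᵀ * Jmat F n * g) * h := by
        simp only [transpose_mul, mul_assoc]
    _ = Jmat F n := by rw [hg.2, hh.2]

lemma inSO_inv (hg : inSO F n g) : inSO F n g⁻¹ := by
  refine ⟨by rw [det_nonsing_inv, hg.1, Ring.inverse_one], ?_⟩
  calc g⁻¹ᵀ * Jmat F n * g⁻¹ = g⁻¹ᵀ * (gᵀ * Jmat F n * g) * g⁻¹ := by rw [hg.2]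
    _ = (g * g⁻¹)ᵀ * Jmat F n * (g * g⁻¹) := by simp only [transpose_mul, mul_assoc]
    _ = Jmat F n := by rw [mul_nonsing_inv _ hg.isUnit_det, transpose_one, one_mul, mul_one]

end SO

section Valuation

variable {F : Type*} [Field F] {v : F → ℤ}

lemma zero_mem_pPow (k : ℤ) : (0 : F) ∈ pPow F v k := Or.inl rfl

lemma pPow_anti {k k' : ℤ} (h : k' ≤ k) : pPow F v k ⊆ pPow F v k' := by
  rintro x (rfl | ⟨hx, hxk⟩)
  exacts [Or.inl rfl, Or.inr ⟨hx, h.trans hxk⟩]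

lemma add_mem_pPow (hadd : ∀ x y : F, x ≠ 0 → y ≠ 0 → x + y ≠ 0 → min (v x) (v y) ≤ v (x+y))
    {k : ℤ} {x y : F} (hx : x ∈ pPow F v k) (hy : y ∈ pPow F v k) : x + y ∈ pPow F v k := by
  rcases hx with rfl | ⟨hx0, hxk⟩
  · rwa [zero_add]
  rcases hy with rfl | ⟨hy0, hyk⟩
  · rw [add_zero]; exact Or.inr ⟨hx0, hxk⟩
  by_cases hxy : x + y = 0
  · exact Or.inl hxy
  · exact Or.inr ⟨hxy, (le_min hxk hyk).trans (hadd x y hx0 hy0 hxy)⟩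

lemma sum_mem_pPow (hadd : ∀ x y : F, x ≠ 0 → y ≠ 0 → x + y ≠ 0 → min (v x) (v y) ≤ v (x+y))
    {k : ℤ} {ι : Type*} (s : Finset ι) (f : ι → F) (h : ∀ i ∈ s, f i ∈ pPow F v k) :
    ∑ i ∈ s, f i ∈ pPow F v k :=
  Finset.sum_induction f (· ∈ pPow F v k) (fun _ _ => add_mem_pPow hadd) (zero_mem_pPow k) h

lemma mul_mem_pPow (hmul : ∀ x y : F, x ≠ 0 → y ≠ 0 → v (x*y) = v x + v y)
    {k k' : ℤ} {x y : F} (hx : x ∈ pPow F v k) (hy : y ∈ pPow F v k') :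
    x * y ∈ pPow F v (k + k') := by
  rcases hx with rfl | ⟨hx0, hxk⟩
  · exact Or.inl (zero_mul y)
  rcases hy with rfl | ⟨hy0, hyk⟩
  · exact Or.inl (mul_zero x)
  exact Or.inr ⟨mul_ne_zero hx0 hy0, by rw [hmul x y hx0 hy0]; omega⟩

end Valuation

section Hm

variable {F : Type*} [Field F] {v : F → ℤ} {ϖ : F} {l m : ℕ}
  {a b g h : Matrix (Fin (2*l)) (Fin (2*l)) F}

lemma inKm_mul (hmul : ∀ x y : F, x ≠ 0 → y ≠ 0 → v (x*y) = v x + v y)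
    (hadd : ∀ x y : F, x ≠ 0 → y ≠ 0 → x + y ≠ 0 → min (v x) (v y) ≤ v (x+y))
    (ha : inKm F v l m a) (hb : inKm F v l m b) : inKm F v l m (a * b) := by
  refine ⟨inSO_mul ha.1 hb.1, fun i j => ?_⟩
  have hprod : ((a - 1) * (b - 1)) i j ∈ pPow F v m := by
    rw [mul_apply]
    refine sum_mem_pPow hadd _ _ fun p _ => pPow_anti (k := m + m) (by omega) ?_
    exact mul_mem_pPow hmul (ha.2 i p) (hb.2 p j)
  have hexp : a * b - 1 = (a - 1) * (b - 1) + (a - 1) + (b - 1) := by noncomm_ring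
  rw [hexp, Matrix.add_apply, Matrix.add_apply]
  exact add_mem_pPow hadd (add_mem_pPow hadd hprod (ha.2 i j)) (hb.2 i j)

lemma inKm_inv (ha : inKm F v l m a) : inKm F v l m a⁻¹ := by
  refine ⟨inSO_inv ha.1, fun i j => ?_⟩
  have : (a⁻¹ - 1) i j = (a - 1) j.rev i.rev := by
    simp [ha.1.inv_eq, Jmat_mul_mul_Jmat, one_apply, Fin.rev_inj, eq_comm]
  rw [this]
  exact ha.2 _ _

lemma emDiag_mul_emDiagInv (hϖ : ϖ ≠ 0) : emDiag F ϖ l m * emDiagInv F ϖ l m = 1 := by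
  rw [emDiag, emDiagInv, diagonal_mul_diagonal, ← diagonal_one]
  congr 1
  funext i
  split_ifs <;> rw [← zpow_add₀ hϖ] <;> simp

lemma inHm_mul (hϖ : ϖ ≠ 0) (hmul : ∀ x y : F, x ≠ 0 → y ≠ 0 → v (x*y) = v x + v y)
    (hadd : ∀ x y : F, x ≠ 0 → y ≠ 0 → x + y ≠ 0 → min (v x) (v y) ≤ v (x+y))
    (hg : inHm F v ϖ l m g) (hh : inHm F v ϖ l m h) : inHm F v ϖ l m (g * h) := by
  obtain ⟨a, ha, rfl⟩ := hg
  obtain ⟨b, hb, rfl⟩ := hh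
  refine ⟨a * b, inKm_mul hmul hadd ha hb, ?_⟩
  have hcancel : emDiagInv F ϖ l m * emDiag F ϖ l m = 1 :=
    mul_eq_one_comm.mp (emDiag_mul_emDiagInv hϖ)
  simp only [mul_assoc, ← mul_assoc (emDiagInv F ϖ l m), hcancel, one_mul]

lemma inHm_inv (hϖ : ϖ ≠ 0) (hg : inHm F v ϖ l m g) : inHm F v ϖ l m g⁻¹ := by
  obtain ⟨a, ha, rfl⟩ := hg
  refine ⟨a⁻¹, inKm_inv ha, ?_⟩
  rw [Matrix.mul_inv_rev, Matrix.mul_inv_rev, inv_eq_left_inv (emDiag_mul_emDiagInv hϖ),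
    inv_eq_right_inv (emDiag_mul_emDiagInv hϖ), mul_assoc]

lemma inHm_conj (hϖ : ϖ ≠ 0) (hmul : ∀ x y : F, x ≠ 0 → y ≠ 0 → v (x*y) = v x + v y)
    (hadd : ∀ x y : F, x ≠ 0 → y ≠ 0 → x + y ≠ 0 → min (v x) (v y) ≤ v (x+y))
    (hg : inHm F v ϖ l m g) (hh : inHm F v ϖ l m h) : inHm F v ϖ l m (g * h * g⁻¹) :=
  inHm_mul hϖ hmul hadd (inHm_mul hϖ hmul hadd hg hh) (inHm_inv hϖ hg)

end Hm

def IsStrictBlockUpper {ι α R : Type*} [LE α] [Zero R] (X : Matrix ι ι R) (b : ι → α) : Prop :=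
  ∀ ⦃i j⦄, b j ≤ b i → X i j = 0

section BlockUpper

variable {ι α R : Type*} [Fintype ι] [LinearOrder α] [NonUnitalNonAssocSemiring R]
  {b : ι → α} {A X : Matrix ι ι R}

lemma IsStrictBlockUpper.blockTriangular_mul (hX : IsStrictBlockUpper X b)
    (hA : BlockTriangular A b) : IsStrictBlockUpper (A * X) b := by
  intro i j hji
  rw [mul_apply]
  refine Finset.sum_eq_zero fun p _ => ?_
  rcases lt_or_ge (b p) (b i) with hpi | hip
  · rw [hA hpi, zero_mul]
  · rw [hX (hji.trans hip), mul_zero]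

lemma IsStrictBlockUpper.mul_blockTriangular (hX : IsStrictBlockUpper X b)
    (hA : BlockTriangular A b) : IsStrictBlockUpper (X * A) b := by
  intro i j hji
  rw [mul_apply]
  refine Finset.sum_eq_zero fun p _ => ?_
  rcases lt_or_ge (b j) (b p) with hjp | hpj
  · rw [hA hjp, mul_zero]
  · rw [hX (hpj.trans hji), zero_mul]

end BlockUpper

lemma isUUT.blockTriangular {F α : Type*} [Field F] [Preorder α] {N : ℕ}
    {g : Matrix (Fin N) (Fin N) F} {b : Fin N → α} (hg : isUUT F N g) (hb : Monotone b) :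
    BlockTriangular g b :=
  fun _ _ hij => hg.2 _ _ (hb.reflect_lt hij)

lemma blk3_monotone (l k : ℕ) : Monotone (blk3 l k) := by
  intro x y hxy
  simp only [blk3]
  split_ifs <;> omega

lemma blk3_lt_blk3_iff {l k : ℕ} (hkl : k ≤ l) {i j : ℕ} :
    blk3 l k i < blk3 l k j ↔ (i < k ∧ k ≤ j) ∨ (i < 2*l-k ∧ 2*l-k ≤ j) := by
  simp only [blk3]
  split_ifs <;> omega

section Nk

variable {F : Type*} [Field F] {l k : ℕ} {g u : Matrix (Fin (2*l)) (Fin (2*l)) F}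

lemma inNk_iff (hkl : k ≤ l) :
    inNk F l k g ↔ inSO F (2*l) g ∧ IsStrictBlockUpper (g - 1) (blk3 l k ∘ Fin.val) := by
  refine and_congr_right fun _ => forall₂_congr fun i j => ?_
  rw [← blk3_lt_blk3_iff hkl, not_lt, Matrix.sub_apply, sub_eq_zero, one_apply]
  rfl

lemma inU_of_inNk (hg : inNk F l k g) : inU F l g :=
  ⟨hg.1, fun i => by rw [hg.2 i i (by omega), if_pos rfl],
    fun i j hji => by rw [hg.2 i j (by omega), if_neg (fun h => by omega)]⟩

lemma inNk_conj (hkl : k ≤ l) (hg : inU F l g) (hu : inNk F l k u) :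
    inNk F l k (g⁻¹ * u * g) := by
  rw [inNk_iff hkl] at hu ⊢
  have hdet := hg.1.isUnit_det
  have := invertibleOfIsUnitDet g hdet
  have hg_tri : BlockTriangular g (blk3 l k ∘ Fin.val) :=
    hg.2.blockTriangular ((blk3_monotone l k).comp fun _ _ => id)
  have hconj_sub : g⁻¹ * u * g - 1 = g⁻¹ * (u - 1) * g := by
    rw [mul_sub, sub_mul, mul_one, nonsing_inv_mul _ hdet]
  refine ⟨inSO_mul (inSO_mul (inSO_inv hg.1) hu.1) hg.1, ?_⟩
  rw [hconj_sub]
  exact (hu.2.blockTriangular_mul (blockTriangular_inv_of_blockTriangular hg_tri)).mul_blockTriangular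
    hg_tri

end Nk

theorem statement18_general (F : Type*) [Field F] (v : F → ℤ) (ϖ : F)
    (hϖ0 : ϖ ≠ 0)
    (hmul : ∀ x y : F, x ≠ 0 → y ≠ 0 → v (x*y) = v x + v y)
    (hadd : ∀ x y : F, x ≠ 0 → y ≠ 0 → x + y ≠ 0 → min (v x) (v y) ≤ v (x+y))
    (l k m : ℕ) (hkl : k ≤ l) :
    ∀ uplus u0 : Matrix (Fin (2*l)) (Fin (2*l)) F,
      inSkPlus F l k uplus → inUm F v ϖ l m uplus →
      inNk F l k u0 → ¬ inUm F v ϖ l m u0 →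
      inNk F l k (uplus⁻¹ * u0 * uplus) ∧ ¬ inUm F v ϖ l m (uplus⁻¹ * u0 * uplus) := by
  intro g u _ hg hu hu_notUm
  refine ⟨inNk_conj hkl hg.1 hu, fun hconj => hu_notUm ⟨inU_of_inNk hu, ?_⟩⟩
  have hu_eq : u = g * (g⁻¹ * u * g) * g⁻¹ := by
    have hdet := hg.1.1.isUnit_det
    simp only [mul_assoc, mul_nonsing_inv _ hdet, mul_one, mul_nonsing_inv_cancel_left _ _ hdet]
  rw [hu_eq]
  exact inHm_conj hϖ0 hmul hadd hg.2 hconj.2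

/-- conjugation by elements of `S_k^+ ∩ U_m` preserves the complement
`N_k ∖ (N_k ∩ U_m)`. -/
theorem statement18 (F : Type*) [Field F] (v : F → ℤ) (ϖ : F)
    (hϖ0 : ϖ ≠ 0) (hϖ : v ϖ = 1)
    (hmul : ∀ x y : F, x ≠ 0 → y ≠ 0 → v (x*y) = v x + v y)
    (hadd : ∀ x y : F, x ≠ 0 → y ≠ 0 → x + y ≠ 0 → min (v x) (v y) ≤ v (x+y))
    (l k m : ℕ) (hk : 1 ≤ k) (hkl : k ≤ l) (hm : 1 ≤ m) :
    ∀ uplus u0 : Matrix (Fin (2*l)) (Fin (2*l)) F,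
      inSkPlus F l k uplus → inUm F v ϖ l m uplus →
      inNk F l k u0 → ¬ inUm F v ϖ l m u0 →
      inNk F l k (uplus⁻¹ * u0 * uplus) ∧ ¬ inUm F v ϖ l m (uplus⁻¹ * u0 * uplus) :=
  statement18_general F v ϖ hϖ0 hmul hadd l k m hkl

end
end
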